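/- (Interpolation inequality between L², V and D(A)) There exists a constant C>0 such that for every u∈D(A) one has ‖u‖_V ≤ C·‖u‖_{L²(−1,1)}^{1/2}·‖u‖_{D(A)}^{1/2}, i.e. (∫_{−1}^{1} u² dx + ∫_{−1}^{1} (1−x²)u′(x)² dx)^{1/2} ≤ C·(∫_{−1}^{1} u² dx)^{1/4}·(∫_{−1}^{1} u² dx + ∫_{−1}^{1} (Au)(x)² dx)^{1/4}. -/

import Mathlib

/-!
Write `F(x) = ∫_{-1}^x Au = (1 - x²) u'(x)`. On `[a, b] ⊂ (-1, 1)`, integration by parts gives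
`∫_a^b (1 - x²) u'² = ∫_a^b u' F = [u F]_a^b - ∫_a^b u Au`. Since `F` vanishes at both `±1`,
Cauchy–Schwarz gives `F(x)² ≤ |x ∓ 1| ‖Au‖²`, so `(u F)² ≤ |x ∓ 1| u² ‖Au‖²`; as `u²` is integrable
while `1 / |x ∓ 1|` is not, this is arbitrarily small at suitable points arbitrarily close to `±1`.
Hence `∫ (1 - x²) u'² ≤ ‖u‖ ‖Au‖`, and `‖u‖_V² ≤ ‖u‖² + ‖u‖ ‖Au‖ ≤ 2 ‖u‖ ‖u‖_{D(A)}`.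
-/

open MeasureTheory Set Filter

noncomputable section

/-- `u` belongs to the domain `D(A)` of the degenerate operator `A u = ((1-x²)u')'` on
`I = (-1,1)`: `u ∈ L²(I)` is locally absolutely continuous on `I` with a.e. derivative `u'`,
and `x ↦ (1-x²)u'(x)` extends to an absolutely continuous function on `[-1,1]` vanishing at
`x = ±1`, whose a.e. derivative `Au` belongs to `L²(I)`. -/
structure MemDA (u u' Au : ℝ → ℝ) : Prop where
  sq_int : IntegrableOn (fun x => u x ^ 2) (Ioo (-1:ℝ) 1)
  locAC : ∀ a b : ℝ, a ∈ Ioo (-1:ℝ) 1 → b ∈ Ioo (-1:ℝ) 1 →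
      u b - u a = ∫ t in a..b, u' t
  deriv_intble : ∀ a b : ℝ, a ∈ Ioo (-1:ℝ) 1 → b ∈ Ioo (-1:ℝ) 1 →
      IntervalIntegrable u' volume a b
  Au_intble : IntervalIntegrable Au volume (-1) 1
  Au_sq_int : IntegrableOn (fun x => Au x ^ 2) (Ioo (-1:ℝ) 1)
  flux : ∀ x ∈ Ioo (-1:ℝ) 1, (1 - x ^ 2) * u' x = ∫ t in (-1:ℝ)..x, Au t
  flux_one : (∫ t in (-1:ℝ)..(1:ℝ), Au t) = 0

open Topology

theorem integral_abs_mul_abs_le_sqrt_mul_sqrt {α : Type*} [MeasurableSpace α] {μ : Measure α}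
    {f g : α → ℝ} (hf : MemLp f 2 μ) (hg : MemLp g 2 μ) :
    ∫ x, |f x| * |g x| ∂μ ≤ √(∫ x, f x ^ 2 ∂μ) * √(∫ x, g x ^ 2 ∂μ) := by
  have key := integral_mul_norm_le_Lp_mul_Lq (μ := μ) Real.HolderConjugate.two_two
    (by simpa using hf) (by simpa using hg)
  simpa only [Real.norm_eq_abs, Real.sqrt_eq_rpow, Real.rpow_two, sq_abs] using key

theorem exists_abs_sub_mul_lt_of_integrableOn {φ : ℝ → ℝ} {c d e δ : ℝ} (hde : d < e)
    (hc : c ∈ Icc d e) (hφ : IntegrableOn φ (Ioo d e)) (hδ : 0 < δ) :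
    ∃ x ∈ Ioo d e, |x - c| * φ x < δ := by
  by_contra! hlarge
  have hinv : IntegrableOn (fun x => (x - c)⁻¹) (Ioo d e) := by
    refine (hφ.const_mul δ⁻¹).mono' (by fun_prop) ?_
    filter_upwards [ae_restrict_mem measurableSet_Ioo] with x hx
    have hlx := hlarge x hx
    have hxc : 0 < |x - c| := by
      refine (abs_nonneg _).lt_of_ne fun h0 => ?_
      rw [← h0, zero_mul] at hlx
      linarith
    rw [norm_inv, Real.norm_eq_abs, inv_le_iff_one_le_mul₀ hxc]
    field_simp
    linarith
  have := intervalIntegrable_sub_inv_iff.1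
    ((intervalIntegrable_iff_integrableOn_Ioo_of_le hde.le).2 hinv)
  rw [uIcc_of_le hde.le] at this
  exact this.elim hde.ne (absurd hc)

theorem sq_intervalIntegral_le_mul_integral_sq {g : ℝ → ℝ} {a b : ℝ} (hab : a ≤ b)
    (hg : MemLp g 2 (volume.restrict (Ioo a b))) :
    (∫ x in a..b, g x) ^ 2 ≤ (b - a) * ∫ x in Ioo a b, g x ^ 2 := by
  have hcs : |∫ x in a..b, g x| ≤ √(b - a) * √(∫ x in Ioo a b, g x ^ 2) :=
    calc |∫ x in a..b, g x| ≤ ∫ x in Ioo a b, |1| * |g x| := by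
          rw [intervalIntegral.integral_of_le hab, integral_Ioc_eq_integral_Ioo]
          simpa using abs_integral_le_integral_abs
      _ ≤ √(∫ x in Ioo a b, (1 : ℝ) ^ 2) * √(∫ x in Ioo a b, g x ^ 2) :=
          integral_abs_mul_abs_le_sqrt_mul_sqrt (memLp_const 1) hg
      _ = √(b - a) * √(∫ x in Ioo a b, g x ^ 2) := by simp [hab]
  have hnonneg : 0 ≤ ∫ x in Ioo a b, g x ^ 2 :=
    setIntegral_nonneg measurableSet_Ioo fun _ _ => sq_nonneg _
  calc (∫ x in a..b, g x) ^ 2 ≤ (√(b - a) * √(∫ x in Ioo a b, g x ^ 2)) ^ 2 :=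
        sq_le_sq' (neg_le_of_abs_le hcs) (le_of_abs_le hcs)
    _ = (b - a) * ∫ x in Ioo a b, g x ^ 2 := by
        rw [mul_pow, Real.sq_sqrt (sub_nonneg.2 hab), Real.sq_sqrt hnonneg]

theorem setIntegral_Ioo_le_of_forall_setIntegral_Ioc_le {g : ℝ → ℝ} {A B I : ℝ}
    (hg : IntegrableOn g (Ioo A B))
    (hle : ∀ c d, A < c → d < B → ∫ x in Ioc c d, g x ≤ I) :
    ∫ x in Ioo A B, g x ≤ I := by
  let l := 𝓝[>] A ×ˢ 𝓝[<] B
  have hcover : AECover (volume.restrict (Ioo A B)) l fun p => Ioc p.1 p.2 :=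
    aecover_Ioo_of_Ioc (tendsto_fst.mono_right nhdsWithin_le_nhds)
      (tendsto_snd.mono_right nhdsWithin_le_nhds)
  refine le_of_tendsto (hcover.integral_tendsto_of_countably_generated hg) ?_
  filter_upwards [prod_mem_prod self_mem_nhdsWithin self_mem_nhdsWithin] with p hp
  have hsub : Ioc p.1 p.2 ⊆ Ioo A B := fun x hx =>
    ⟨lt_trans hp.1 hx.1, lt_of_le_of_lt hx.2 hp.2⟩
  rw [Measure.restrict_restrict_of_subset hsub]
  exact hle p.1 p.2 hp.1 hp.2

theorem integral_mul_deriv_eq_deriv_mul_of_sub_eq_integral {f f' g g' : ℝ → ℝ} {a b : ℝ}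
    (hf' : IntervalIntegrable f' volume a b) (hg' : IntervalIntegrable g' volume a b)
    (hf : ∀ x ∈ uIcc a b, f x - f a = ∫ t in a..x, f' t)
    (hg : ∀ x ∈ uIcc a b, g x - g a = ∫ t in a..x, g' t) :
    ∫ x in a..b, f x * g' x = f b * g b - f a * g a - ∫ x in a..b, f' x * g x := by
  set F : ℝ → ℝ := fun x => f a + ∫ t in a..x, f' t
  set G : ℝ → ℝ := fun x => g a + ∫ t in a..x, g' t
  have hFf : EqOn F f (uIcc a b) := fun x hx => by simp [F, ← hf x hx]
  have hGg : EqOn G g (uIcc a b) := fun x hx => by simp [G, ← hg x hx]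
  have hconst : ∀ c : ℝ, AbsolutelyContinuousOnInterval (fun _ => c) a b := fun c =>
    (LipschitzWith.const c).lipschitzOnWith.absolutelyContinuousOnInterval
  have hF : AbsolutelyContinuousOnInterval F a b :=
    (hconst _).fun_add (hf'.absolutelyContinuousOnInterval_intervalIntegral left_mem_uIcc)
  have hG : AbsolutelyContinuousOnInterval G a b :=
    (hconst _).fun_add (hg'.absolutelyContinuousOnInterval_intervalIntegral left_mem_uIcc)
  have hae : ∀ᵐ x, x ∈ uIoc a b →
      F x = f x ∧ G x = g x ∧ deriv F x = f' x ∧ deriv G x = g' x := by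
    filter_upwards [hf'.ae_hasDerivAt_integral, hg'.ae_hasDerivAt_integral] with x hFx hGx hx
    have hx' := uIoc_subset_uIcc hx
    exact ⟨hFf hx', hGg hx', ((hFx hx' a left_mem_uIcc).const_add _).deriv,
      ((hGx hx' a left_mem_uIcc).const_add _).deriv⟩
  calc ∫ x in a..b, f x * g' x = ∫ x in a..b, F x * deriv G x :=
        intervalIntegral.integral_congr_ae (hae.mono fun x hx hab => by simp [hx hab])
    _ = F b * G b - F a * G a - ∫ x in a..b, deriv F x * G x :=
        hF.integral_mul_deriv_eq_deriv_mul hG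
    _ = f b * g b - f a * g a - ∫ x in a..b, f' x * g x := by
        rw [hFf left_mem_uIcc, hFf right_mem_uIcc, hGg left_mem_uIcc, hGg right_mem_uIcc]
        exact congrArg _ (intervalIntegral.integral_congr_ae
          (hae.mono fun x hx hab => by simp [hx hab]))

namespace MemDA

variable {u u' Au : ℝ → ℝ}

theorem intervalIntegrable_Au (h : MemDA u u' Au) {c d : ℝ} (hc : c ∈ Icc (-1 : ℝ) 1)
    (hd : d ∈ Icc (-1 : ℝ) 1) : IntervalIntegrable Au volume c d :=
  h.Au_intble.mono_set <| by
    rw [uIcc_of_le (by norm_num : (-1 : ℝ) ≤ 1)]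
    exact uIcc_subset_Icc hc hd

theorem memLp_Au (h : MemDA u u' Au) : MemLp Au 2 (volume.restrict (Ioo (-1 : ℝ) 1)) :=
  (memLp_two_iff_integrable_sq (((intervalIntegrable_iff_integrableOn_Ioo_of_le
    (by norm_num)).1 h.Au_intble).aestronglyMeasurable)).2 h.Au_sq_int

theorem continuousOn (h : MemDA u u' Au) : ContinuousOn u (Ioo (-1 : ℝ) 1) := by
  intro x hx
  obtain ⟨c, hc, hcx⟩ := exists_between hx.1
  obtain ⟨d, hxd, hd⟩ := exists_between hx.2
  have hcI : c ∈ Ioo (-1 : ℝ) 1 := ⟨hc, hcx.trans hx.2⟩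
  have hdI : d ∈ Ioo (-1 : ℝ) 1 := ⟨hx.1.trans hxd, hd⟩
  have hcd : c ≤ d := (hcx.trans hxd).le
  have hprim : ContinuousOn (fun y => u c + ∫ t in c..y, u' t) (Icc c d) := by
    simpa only [uIcc_of_le hcd] using continuousOn_const.fun_add
      (intervalIntegral.continuousOn_primitive_interval' (h.deriv_intble c d hcI hdI)
        left_mem_uIcc)
  have heq : EqOn (fun y => u c + ∫ t in c..y, u' t) u (Icc c d) := fun y hy => by
    simp [← h.locAC c y hcI (Icc_subset_Ioo hc hd hy)]
  exact ((hprim.congr heq.symm).continuousAt (Icc_mem_nhds hcx hxd)).continuousWithinAt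

theorem memLp_u (h : MemDA u u' Au) : MemLp u 2 (volume.restrict (Ioo (-1 : ℝ) 1)) :=
  (memLp_two_iff_integrable_sq (h.continuousOn.aestronglyMeasurable measurableSet_Ioo)).2
    h.sq_int

theorem sq_integral_Au_le (h : MemDA u u' Au) {c d : ℝ} (hc : -1 ≤ c) (hcd : c ≤ d)
    (hd : d ≤ 1) :
    (∫ t in c..d, Au t) ^ 2 ≤ (d - c) * ∫ x in Ioo (-1 : ℝ) 1, Au x ^ 2 := by
  have hsub : Ioo c d ⊆ Ioo (-1 : ℝ) 1 := Ioo_subset_Ioo hc hd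
  calc (∫ t in c..d, Au t) ^ 2 ≤ (d - c) * ∫ x in Ioo c d, Au x ^ 2 :=
        sq_intervalIntegral_le_mul_integral_sq hcd
          (h.memLp_Au.mono_measure (Measure.restrict_mono hsub le_rfl))
    _ ≤ (d - c) * ∫ x in Ioo (-1 : ℝ) 1, Au x ^ 2 :=
        mul_le_mul_of_nonneg_left (setIntegral_mono_set h.Au_sq_int
          (ae_of_all _ fun _ => sq_nonneg _) hsub.eventuallyLE) (sub_nonneg.2 hcd)

theorem sq_flux_le (h : MemDA u u' Au) {x c : ℝ} (hx : x ∈ Icc (-1 : ℝ) 1)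
    (hc : c = -1 ∨ c = 1) :
    (∫ t in (-1 : ℝ)..x, Au t) ^ 2 ≤ |x - c| * ∫ y in Ioo (-1 : ℝ) 1, Au y ^ 2 := by
  rcases hc with rfl | rfl
  · rw [abs_of_nonneg (by linarith [hx.1])]
    exact h.sq_integral_Au_le le_rfl hx.1 hx.2
  · have hflux : ∫ t in (-1 : ℝ)..x, Au t = -∫ t in x..1, Au t := by
      rw [← intervalIntegral.integral_interval_sub_left h.Au_intble
        (h.intervalIntegrable_Au (left_mem_Icc.2 (by norm_num)) hx), h.flux_one, zero_sub, neg_neg]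
    rw [hflux, neg_sq, abs_of_nonpos (by linarith [hx.2]), neg_sub]
    exact h.sq_integral_Au_le hx.1 hx.2 le_rfl

theorem exists_abs_mul_flux_lt (h : MemDA u u' Au) {c d e ε : ℝ} (hd : -1 ≤ d) (hde : d < e)
    (he : e ≤ 1) (hc : c = -1 ∨ c = 1) (hcde : c ∈ Icc d e) (hε : 0 < ε) :
    ∃ x ∈ Ioo d e, |u x * ∫ t in (-1 : ℝ)..x, Au t| < ε := by
  have hsub : Ioo d e ⊆ Ioo (-1 : ℝ) 1 := Ioo_subset_Ioo hd he
  obtain ⟨x, hx, hsmall⟩ := exists_abs_sub_mul_lt_of_integrableOn hde hcde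
    ((h.sq_int.mono_set hsub).mul_const (∫ y in Ioo (-1 : ℝ) 1, Au y ^ 2)) (pow_pos hε 2)
  refine ⟨x, hx, abs_lt_of_sq_lt_sq ?_ hε.le⟩
  calc (u x * ∫ t in (-1 : ℝ)..x, Au t) ^ 2
      = u x ^ 2 * (∫ t in (-1 : ℝ)..x, Au t) ^ 2 := mul_pow _ _ _
    _ ≤ u x ^ 2 * (|x - c| * ∫ y in Ioo (-1 : ℝ) 1, Au y ^ 2) :=
        mul_le_mul_of_nonneg_left (h.sq_flux_le (Ioo_subset_Icc_self (hsub hx)) hc)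
          (sq_nonneg _)
    _ < ε ^ 2 := by linarith

theorem eqOn_deriv_mul_flux (h : MemDA u u' Au) :
    EqOn (fun x => u' x * ∫ t in (-1 : ℝ)..x, Au t) (fun x => (1 - x ^ 2) * u' x ^ 2)
      (Ioo (-1 : ℝ) 1) := fun x hx => by
  simp only [← h.flux x hx]
  ring

theorem intervalIntegrable_weight_mul_deriv_sq (h : MemDA u u' Au) {a b : ℝ}
    (ha : a ∈ Ioo (-1 : ℝ) 1) (hb : b ∈ Ioo (-1 : ℝ) 1) :
    IntervalIntegrable (fun x => (1 - x ^ 2) * u' x ^ 2) volume a b := by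
  have hsub : uIcc a b ⊆ Icc (-1 : ℝ) 1 :=
    uIcc_subset_Icc (Ioo_subset_Icc_self ha) (Ioo_subset_Icc_self hb)
  have hflux : ContinuousOn (fun x => ∫ t in (-1 : ℝ)..x, Au t) (uIcc a b) := by
    have := intervalIntegral.continuousOn_primitive_interval' h.Au_intble left_mem_uIcc
    rw [uIcc_of_le (by norm_num : (-1 : ℝ) ≤ 1)] at this
    exact this.mono hsub
  exact ((h.deriv_intble a b ha hb).mul_continuousOn hflux).congr
    (h.eqOn_deriv_mul_flux.mono (uIoc_subset_uIcc.trans (ordConnected_Ioo.uIcc_subset ha hb)))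

theorem integral_weight_mul_deriv_sq_eq (h : MemDA u u' Au) {a b : ℝ}
    (ha : a ∈ Ioo (-1 : ℝ) 1) (hb : b ∈ Ioo (-1 : ℝ) 1) :
    ∫ x in a..b, (1 - x ^ 2) * u' x ^ 2
      = u b * (∫ t in (-1 : ℝ)..b, Au t) - u a * (∫ t in (-1 : ℝ)..a, Au t)
        - ∫ x in a..b, u x * Au x := by
  have hmem : ∀ x ∈ uIcc a b, x ∈ Ioo (-1 : ℝ) 1 := fun x hx =>
    ordConnected_Ioo.uIcc_subset ha hb hx
  have hAu : ∀ x ∈ Ioo (-1 : ℝ) 1, IntervalIntegrable Au volume (-1) x := fun x hx =>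
    h.intervalIntegrable_Au (left_mem_Icc.2 (by norm_num)) (Ioo_subset_Icc_self hx)
  have hparts := integral_mul_deriv_eq_deriv_mul_of_sub_eq_integral (h.deriv_intble a b ha hb)
    (h.intervalIntegrable_Au (Ioo_subset_Icc_self ha) (Ioo_subset_Icc_self hb))
    (fun x hx => h.locAC a x ha (hmem x hx))
    (fun x hx => intervalIntegral.integral_interval_sub_left (hAu x (hmem x hx)) (hAu a ha))
  rw [← intervalIntegral.integral_congr (h.eqOn_deriv_mul_flux.mono hmem)]
  linarith

theorem abs_integral_mul_Au_le (h : MemDA u u' Au) {a b : ℝ} (ha : -1 ≤ a) (hab : a ≤ b)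
    (hb : b ≤ 1) :
    |∫ x in a..b, u x * Au x|
      ≤ √(∫ x in Ioo (-1 : ℝ) 1, u x ^ 2) * √(∫ x in Ioo (-1 : ℝ) 1, Au x ^ 2) := by
  have hsub : Ioo a b ⊆ Ioo (-1 : ℝ) 1 := Ioo_subset_Ioo ha hb
  have hrestrict := Measure.restrict_mono (μ := volume) hsub le_rfl
  have hmono : ∀ {f : ℝ → ℝ}, IntegrableOn (fun x => f x ^ 2) (Ioo (-1 : ℝ) 1) →
      √(∫ x in Ioo a b, f x ^ 2) ≤ √(∫ x in Ioo (-1 : ℝ) 1, f x ^ 2) := fun hf =>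
    Real.sqrt_le_sqrt (setIntegral_mono_set hf (ae_of_all _ fun _ => sq_nonneg _)
      hsub.eventuallyLE)
  calc |∫ x in a..b, u x * Au x| ≤ ∫ x in Ioo a b, |u x| * |Au x| := by
        rw [intervalIntegral.integral_of_le hab, integral_Ioc_eq_integral_Ioo]
        simpa only [abs_mul] using abs_integral_le_integral_abs (f := fun x => u x * Au x)
    _ ≤ √(∫ x in Ioo a b, u x ^ 2) * √(∫ x in Ioo a b, Au x ^ 2) :=
        integral_abs_mul_abs_le_sqrt_mul_sqrt (h.memLp_u.mono_measure hrestrict)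
          (h.memLp_Au.mono_measure hrestrict)
    _ ≤ _ := mul_le_mul (hmono h.sq_int) (hmono h.Au_sq_int) (Real.sqrt_nonneg _)
        (Real.sqrt_nonneg _)

theorem setIntegral_Ioc_weight_mul_deriv_sq_le (h : MemDA u u' Au) {c d : ℝ} (hc : -1 < c)
    (hd : d < 1) :
    ∫ x in Ioc c d, (1 - x ^ 2) * u' x ^ 2
      ≤ √(∫ x in Ioo (-1 : ℝ) 1, u x ^ 2) * √(∫ x in Ioo (-1 : ℝ) 1, Au x ^ 2) := by
  rcases lt_or_ge d c with hdc | hcd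
  · rw [Ioc_eq_empty_of_le hdc.le, Measure.restrict_empty, integral_zero_measure]
    positivity
  refine le_of_forall_pos_le_add fun ε hε => ?_
  obtain ⟨a, ha, hua⟩ := h.exists_abs_mul_flux_lt le_rfl hc (by linarith) (Or.inl rfl)
    ⟨le_rfl, hc.le⟩ (half_pos hε)
  obtain ⟨b, hb, hub⟩ := h.exists_abs_mul_flux_lt (by linarith) hd le_rfl (Or.inr rfl)
    ⟨hd.le, le_rfl⟩ (half_pos hε)
  have haI : a ∈ Ioo (-1 : ℝ) 1 := ⟨ha.1, by linarith [ha.2]⟩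
  have hbI : b ∈ Ioo (-1 : ℝ) 1 := ⟨by linarith [hb.1], hb.2⟩
  have hab : a ≤ b := by linarith [ha.2, hb.1]
  have hsub : Ioc c d ⊆ Ioc a b := Ioc_subset_Ioc ha.2.le hb.1.le
  have hnonneg : ∀ x ∈ Ioc a b, 0 ≤ (1 - x ^ 2) * u' x ^ 2 := fun x hx => by
    have : x ∈ Ioo (-1 : ℝ) 1 := ⟨haI.1.trans hx.1, hx.2.trans_lt hbI.2⟩
    exact mul_nonneg (by nlinarith [this.1, this.2]) (sq_nonneg _)
  calc ∫ x in Ioc c d, (1 - x ^ 2) * u' x ^ 2 ≤ ∫ x in Ioc a b, (1 - x ^ 2) * u' x ^ 2 :=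
        setIntegral_mono_set
          ((intervalIntegrable_iff_integrableOn_Ioc_of_le hab).1
            (h.intervalIntegrable_weight_mul_deriv_sq haI hbI))
          ((ae_restrict_iff' measurableSet_Ioc).2 (ae_of_all _ hnonneg)) hsub.eventuallyLE
    _ = u b * (∫ t in (-1 : ℝ)..b, Au t) - u a * (∫ t in (-1 : ℝ)..a, Au t)
          - ∫ x in a..b, u x * Au x := by
        rw [← intervalIntegral.integral_of_le hab, h.integral_weight_mul_deriv_sq_eq haI hbI]
    _ ≤ _ := by
        have := h.abs_integral_mul_Au_le haI.1.le hab hbI.2.le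
        linarith [le_abs_self (u b * ∫ t in (-1 : ℝ)..b, Au t),
          neg_abs_le (u a * ∫ t in (-1 : ℝ)..a, Au t), neg_abs_le (∫ x in a..b, u x * Au x)]

theorem integral_weight_mul_deriv_sq_le (h : MemDA u u' Au) :
    ∫ x in Ioo (-1 : ℝ) 1, (1 - x ^ 2) * u' x ^ 2
      ≤ √(∫ x in Ioo (-1 : ℝ) 1, u x ^ 2) * √(∫ x in Ioo (-1 : ℝ) 1, Au x ^ 2) := by
  by_cases hint : IntegrableOn (fun x => (1 - x ^ 2) * u' x ^ 2) (Ioo (-1 : ℝ) 1)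
  · exact setIntegral_Ioo_le_of_forall_setIntegral_Ioc_le hint
      fun c d hc hd => h.setIntegral_Ioc_weight_mul_deriv_sq_le hc hd
  · rw [integral_undef hint]
    positivity

end MemDA

theorem sqrt_add_le_two_mul_rpow_mul_rpow {X Y G : ℝ} (hX : 0 ≤ X) (hY : 0 ≤ Y)
    (hG : G ≤ √X * √Y) :
    √(X + G) ≤ 2 * X ^ ((1 : ℝ) / 4) * (X + Y) ^ ((1 : ℝ) / 4) := by
  have hfourth : ∀ {Z : ℝ}, 0 ≤ Z → (Z ^ ((1 : ℝ) / 4)) ^ 2 = √Z := fun hZ => by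
    rw [← Real.rpow_natCast, ← Real.rpow_mul hZ, Real.sqrt_eq_rpow]
    norm_num
  rw [Real.sqrt_le_iff, mul_pow, mul_pow, hfourth hX, hfourth (add_nonneg hX hY)]
  refine ⟨by positivity, ?_⟩
  have hXY : √Y ≤ √(X + Y) := Real.sqrt_le_sqrt (by linarith)
  have hXX : √X ≤ √(X + Y) := Real.sqrt_le_sqrt (by linarith)
  nlinarith [Real.mul_self_sqrt hX, Real.sqrt_nonneg X, Real.sqrt_nonneg Y]

/-- Interpolation inequality between `L²`, `V` and `D(A)`:
`‖u‖_V ≤ C ‖u‖_{L²}^{1/2} ‖u‖_{D(A)}^{1/2}` for every `u ∈ D(A)`. -/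
theorem interpolation_L2_V_DA :
    ∃ C : ℝ, 0 < C ∧ ∀ u u' Au : ℝ → ℝ, MemDA u u' Au →
      Real.sqrt ((∫ x in Ioo (-1:ℝ) 1, u x ^ 2)
          + ∫ x in Ioo (-1:ℝ) 1, (1 - x ^ 2) * u' x ^ 2)
        ≤ C * (∫ x in Ioo (-1:ℝ) 1, u x ^ 2) ^ ((1:ℝ)/4)
            * ((∫ x in Ioo (-1:ℝ) 1, u x ^ 2)
                + ∫ x in Ioo (-1:ℝ) 1, Au x ^ 2) ^ ((1:ℝ)/4) :=
  ⟨2, two_pos, fun _ _ _ h => sqrt_add_le_two_mul_rpow_mul_rpow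
    (setIntegral_nonneg measurableSet_Ioo fun _ _ => sq_nonneg _)
    (setIntegral_nonneg measurableSet_Ioo fun _ _ => sq_nonneg _)
    h.integral_weight_mul_deriv_sq_le⟩
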